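/- Assume V is finite and nonempty, E is strongly connected, and λ is a multiplier function on V. Then for every L > 0, exactly one of the following two alternatives holds: (1) there exists a family of consistent handicaps for L (so the graph is box expansive by L); or (2) there exists a simple cycle c of some length n with cycle multiplier ∏_{i<n} λ(c i) < L^n (an obstruction showing that no family of consistent handicaps for L exists). -/

import Mathlib

/-- `c` is a cycle of length `n` in the directed graph with edge relation `E`. -/
def IsCycle {V : Type*} (E : V → V → Prop) (n : ℕ) (c : Fin (n + 1) → V) : Prop :=
  c (Fin.last n) = c 0 ∧ ∀ i : Fin n, E (c i.castSucc) (c i.succ)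

/-- The cycle `c` of length `n` is simple, i.e. its first `n` vertices are
pairwise distinct. -/
def IsSimpleCycle {V : Type*} (n : ℕ) (c : Fin (n + 1) → V) : Prop :=
  ∀ i j : Fin n, c i.castSucc = c j.castSucc → i = j

/-- The cycle multiplier of a cycle of length `n`. -/
def cycleMult {V : Type*} (lam : V → ℝ) (n : ℕ) (c : Fin (n + 1) → V) : ℝ :=
  ∏ i : Fin n, lam (c i.castSucc)

/-!
Handicaps force `L ^ n ≤ ∏ λ` around every cycle: multiply the edge inequalities
`φ (c (i+1)) * λ (c i) ≥ L * φ (c i)` around the cycle and cancel `∏ φ`.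

Conversely, put `μ = L / λ`, so that the absence of a bad simple cycle says that every simple
cycle has `μ`-weight at most `1`, and let `φ v` be the largest `μ`-weight of a simple path ending
at `v` (there are finitely many). Extending an optimal path to `k` by an edge `k → j` either
gives a simple path to `j`, or closes a simple cycle through `j`; cutting off that cycle, of
weight at most `1`, leaves a simple path to `j`. Either way `μ k * φ k ≤ φ j`.
-/

open List

section Potentials

variable {V : Type*} (E : V → V → Prop)

theorem prod_comp_succ_eq_prod_comp_castSucc {M : Type*} [CommMonoid M] {n : ℕ}
    {c : Fin (n + 1) → V} (hc : c (Fin.last n) = c 0) (f : V → M) :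
    ∏ i : Fin n, f (c i.succ) = ∏ i : Fin n, f (c i.castSucc) := by
  cases n with
  | zero => simp
  | succ m =>
    rw [Fin.prod_univ_castSucc, Fin.prod_univ_succ, mul_comm]
    simp only [Fin.succ_last, hc, Fin.castSucc_zero, Fin.succ_castSucc]

theorem pow_le_cycleMult_of_handicaps {lam φ : V → ℝ} {L : ℝ} (hL : 0 ≤ L) (hφ : ∀ v, 0 < φ v)
    (h : ∀ k j, E k j → φ j * lam k ≥ L * φ k) {n : ℕ} {c : Fin (n + 1) → V}
    (hc : IsCycle E n c) : L ^ n ≤ cycleMult lam n c := by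
  set P := ∏ i : Fin n, φ (c i.castSucc)
  have hP : 0 < P := Finset.prod_pos fun i _ => hφ _
  refine le_of_mul_le_mul_right ?_ hP
  calc L ^ n * P = ∏ i : Fin n, L * φ (c i.castSucc) := by
        simp [P, Finset.prod_mul_distrib]
    _ ≤ ∏ i : Fin n, φ (c i.succ) * lam (c i.castSucc) :=
        Finset.prod_le_prod (fun i _ => mul_nonneg hL (hφ _).le) fun i _ => h _ _ (hc.2 i)
    _ = cycleMult lam n c * P := by
        rw [Finset.prod_mul_distrib, prod_comp_succ_eq_prod_comp_castSucc hc.1, cycleMult,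
          mul_comm]

theorem exists_isSimpleCycle_of_isChain {x : V} {l : List V}
    (hchain : (x :: l ++ [x]).IsChain E) (hnodup : (x :: l).Nodup) (μ : V → ℝ) :
    ∃ c : Fin (l.length + 2) → V, IsCycle E (l.length + 1) c ∧ IsSimpleCycle (l.length + 1) c ∧
      cycleMult μ (l.length + 1) c = ((x :: l).map μ).prod := by
  refine ⟨fun i => (x :: l ++ [x])[i.val]'(by simp; omega), ⟨?_, fun i => ?_⟩,
    fun i j hij => ?_, ?_⟩
  · simp
  · exact List.isChain_iff_getElem.1 hchain i (by simp; omega)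
  · have hi : (i : ℕ) < (x :: l).length := i.isLt
    have hj : (j : ℕ) < (x :: l).length := j.isLt
    dsimp only [Fin.val_castSucc] at hij
    rw [getElem_append_left hi, getElem_append_left hj] at hij
    exact Fin.ext (hnodup.getElem_inj_iff.1 hij)
  · exact (Finset.prod_congr rfl fun i _ => congrArg μ (getElem_append_left _)).trans
      (Fin.prod_univ_fun_getElem (x :: l) μ)

/-- `p` lists, in order, the vertices preceding `v` on a simple path ending at `v`. -/
def IsSimplePathTo (v : V) (p : List V) : Prop :=
  (p ++ [v]).IsChain E ∧ (p ++ [v]).Nodup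

theorem finite_setOf_isSimplePathTo [Fintype V] (v : V) : {p | IsSimplePathTo E v p}.Finite :=
  (List.finite_length_le V (Fintype.card V)).subset fun p hp =>
    (hp.2.sublist (sublist_append_left p [v])).length_le_card

theorem IsSimplePathTo.exists_extend {μ : V → ℝ} (hμ : ∀ v, 0 ≤ μ v)
    (hcyc : ∀ x l, (x :: l ++ [x]).IsChain E → (x :: l).Nodup → ((x :: l).map μ).prod ≤ 1)
    {k j : V} {p : List V} (hp : IsSimplePathTo E k p) (hkj : E k j) :
    ∃ q, IsSimplePathTo E j q ∧ ((p ++ [k]).map μ).prod ≤ (q.map μ).prod := by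
  have hchain : (p ++ [k] ++ [j]).IsChain E :=
    isChain_append.2 ⟨hp.1, by simp, by simpa using hkj⟩
  by_cases hj : j ∈ p ++ [k]
  · obtain ⟨a, b, hab⟩ := append_of_mem hj
    rw [hab] at hchain
    have hnodup : (a ++ j :: b).Nodup := hab ▸ hp.2
    refine ⟨a, ⟨hchain.infix ?_, hnodup.sublist ?_⟩, ?_⟩
    · exact IsPrefix.isInfix ⟨b ++ [j], by simp⟩
    · simp
    · rw [hab, map_append, prod_append]
      have hcycle : ((j :: b).map μ).prod ≤ 1 :=
        hcyc j b (hchain.infix (IsSuffix.isInfix ⟨a, by simp⟩))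
          (hnodup.sublist (sublist_append_right _ _))
      exact mul_le_of_le_one_right (prod_nonneg (forall_mem_map.2 fun y _ => hμ y)) hcycle
  · exact ⟨p ++ [k], ⟨hchain, hp.2.append (nodup_singleton j) (by simpa using hj)⟩, le_rfl⟩

theorem exists_potential_of_cycleMult_le_one [Fintype V] {μ : V → ℝ} (hμ : ∀ v, 0 ≤ μ v)
    (hcyc : ∀ n, 1 ≤ n → ∀ c : Fin (n + 1) → V,
      IsCycle E n c → IsSimpleCycle n c → cycleMult μ n c ≤ 1) :
    ∃ φ : V → ℝ, (∀ v, 0 < φ v) ∧ ∀ k j, E k j → μ k * φ k ≤ φ j := by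
  have hcycList : ∀ x l, (x :: l ++ [x]).IsChain E → (x :: l).Nodup →
      ((x :: l).map μ).prod ≤ 1 := by
    intro x l hchain hnodup
    obtain ⟨c, hc, hsimple, hmult⟩ := exists_isSimpleCycle_of_isChain E hchain hnodup μ
    exact hmult ▸ hcyc _ (Nat.le_add_left 1 _) c hc hsimple
  choose best hbest hmax using fun v =>
    Set.exists_max_image _ (fun p => (p.map μ).prod) (finite_setOf_isSimplePathTo E v)
      ⟨[], by simp [IsSimplePathTo]⟩
  refine ⟨fun v => ((best v).map μ).prod, fun v => ?_, fun k j hkj => ?_⟩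
  · exact one_pos.trans_le (hmax v [] (by simp [IsSimplePathTo]))
  · obtain ⟨q, hq, hle⟩ := (hbest k).exists_extend E hμ hcycList hkj
    calc μ k * ((best k).map μ).prod = ((best k ++ [k]).map μ).prod := by simp [mul_comm]
      _ ≤ (q.map μ).prod := hle
      _ ≤ ((best j).map μ).prod := hmax j q hq

end Potentials

theorem cycleMult_const_div {V : Type*} (L : ℝ) (lam : V → ℝ) (n : ℕ) (c : Fin (n + 1) → V) :
    cycleMult (fun v => L / lam v) n c = L ^ n / cycleMult lam n c := by
  simp [cycleMult, Finset.prod_div_distrib]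

theorem handicaps_xor_bad_simple_cycle_general
    {V : Type*} [Fintype V]
    (E : V → V → Prop)
    (lam : V → ℝ) (hlam : ∀ v, 0 < lam v)
    (L : ℝ) (hL : 0 < L) :
    Xor'
      (∃ φ : V → ℝ, (∀ v, 0 < φ v) ∧ ∀ k j, E k j → φ j * lam k ≥ L * φ k)
      (∃ n : ℕ, 1 ≤ n ∧ ∃ c : Fin (n + 1) → V,
        IsCycle E n c ∧ IsSimpleCycle n c ∧ cycleMult lam n c < L ^ n) := by
  refine xor_iff_iff_not.2 ⟨?_, fun hgood => ?_⟩
  · rintro ⟨φ, hφ, h⟩ ⟨n, -, c, hc, -, hlt⟩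
    exact (pow_le_cycleMult_of_handicaps E hL.le hφ h hc).not_gt hlt
  · push Not at hgood
    obtain ⟨φ, hφ, h⟩ := exists_potential_of_cycleMult_le_one E
      (fun v => (div_pos hL (hlam v)).le) fun n hn c hc hsimple => by
        have hpos : 0 < cycleMult lam n c := Finset.prod_pos fun i _ => hlam _
        rw [cycleMult_const_div, div_le_one hpos]
        exact hgood n hn c hc hsimple
    refine ⟨φ, hφ, fun k j hkj => ?_⟩
    have := h k j hkj
    rwa [div_mul_eq_mul_div, div_le_iff₀ (hlam k)] at this

/-- For every `L > 0`, exactly one of the following holds: consistent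
handicaps for `L` exist, or there is a simple cycle with cycle multiplier
less than `L ^ n`. -/
theorem handicaps_xor_bad_simple_cycle
    {V : Type*} [Fintype V] [Nonempty V]
    (E : V → V → Prop) (hsc : ∀ u v : V, Relation.ReflTransGen E u v)
    (lam : V → ℝ) (hlam : ∀ v, 0 < lam v)
    (L : ℝ) (hL : 0 < L) :
    Xor'
      (∃ φ : V → ℝ, (∀ v, 0 < φ v) ∧ ∀ k j, E k j → φ j * lam k ≥ L * φ k)
      (∃ n : ℕ, 1 ≤ n ∧ ∃ c : Fin (n + 1) → V,
        IsCycle E n c ∧ IsSimpleCycle n c ∧ cycleMult lam n c < L ^ n) :=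
  handicaps_xor_bad_simple_cycle_general E lam hlam L hL
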